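/- Amendment preserves well-formedness of choreographies: if C is well-formed, then amend D ps C is well-formed. -/

import Mathlib

namespace CC

abbrev Pid := ℕ
abbrev Var := ℕ
abbrev Val := ℕ
abbrev RecVar := ℕ

inductive Label | left | right
deriving Repr

inductive Expr | zero | var (x : Var) | succ (x : Var)
deriving Repr

inductive BExpr | eq (x y : Var)
deriving Repr

/-- Behaviours of the process calculus SP. -/
inductive Behaviour
| send (p : Pid) (e : Expr) (B : Behaviour)
| recv (p : Pid) (x : Var) (B : Behaviour)
| sel (p : Pid) (l : Label) (B : Behaviour)
| branch (p : Pid) (mL mR : Option Behaviour)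
| cond (b : BExpr) (B1 B2 : Behaviour)
| call (X : RecVar)
| nil
deriving Repr

mutual
/-- The merge relation on behaviours. -/
inductive Merge : Behaviour → Behaviour → Behaviour → Prop
| nil : Merge .nil .nil .nil
| call (X) : Merge (.call X) (.call X) (.call X)
| send {B1 B2 B p e} : Merge B1 B2 B → Merge (.send p e B1) (.send p e B2) (.send p e B)
| recv {B1 B2 B p x} : Merge B1 B2 B → Merge (.recv p x B1) (.recv p x B2) (.recv p x B)
| sel {B1 B2 B p l} : Merge B1 B2 B → Merge (.sel p l B1) (.sel p l B2) (.sel p l B)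
| cond {b Bt1 Bt2 Bt Be1 Be2 Be} : Merge Bt1 Bt2 Bt → Merge Be1 Be2 Be →
    Merge (.cond b Bt1 Be1) (.cond b Bt2 Be2) (.cond b Bt Be)
| branch {p mL1 mL2 mL mR1 mR2 mR} : MergeO mL1 mL2 mL → MergeO mR1 mR2 mR →
    Merge (.branch p mL1 mR1) (.branch p mL2 mR2) (.branch p mL mR)

/-- Componentwise merge on optional behaviours. -/
inductive MergeO : Option Behaviour → Option Behaviour → Option Behaviour → Prop
| none : MergeO none none none
| someNone (B) : MergeO (some B) none (some B)
| noneSome (B) : MergeO none (some B) (some B)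
| someSome {B1 B2 B} : Merge B1 B2 B → MergeO (some B1) (some B2) (some B)
end

/-- Interactions. -/
inductive Eta
| com (p : Pid) (e : Expr) (q : Pid) (x : Var)
| sel (p q : Pid) (l : Label)
deriving Repr

/-- Choreographies of Core Choreographies. -/
inductive Chor
| seq (η : Eta) (C : Chor)
| cond (p : Pid) (b : BExpr) (C1 C2 : Chor)
| call (X : RecVar)
| nil
deriving Repr

/-- Sets of procedure definitions. -/
abbrev DefSet := RecVar → List Pid × Chor

def procsEta : Eta → Finset Pid
| .com p _ q _ => {p, q}
| .sel p q _ => {p, q}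

/-- The set of processes occurring in a choreography. -/
def procsC : Chor → Finset Pid
| .seq η C => procsEta η ∪ procsC C
| .cond p _ C1 C2 => insert p (procsC C1 ∪ procsC C2)
| .call _ => ∅
| .nil => ∅

def etaWF : Eta → Prop
| .com p _ q _ => p ≠ q
| .sel p q _ => p ≠ q

/-- Well-formed choreographies: no self-communications. -/
def Chor_WF : Chor → Prop
| .seq η C => etaWF η ∧ Chor_WF C
| .cond _ _ C1 C2 => Chor_WF C1 ∧ Chor_WF C2
| .call _ => True
| .nil => True

/-- Well-formed choreographic programs. -/
def Program_WF (D : DefSet) (C : Chor) : Prop :=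
  Chor_WF C ∧ ∀ X, Chor_WF (D X).2

/-- Behaviour projection. -/
inductive BProj (D : DefSet) : Chor → Pid → Behaviour → Prop
| send {p e q x C B} : BProj D C p B → BProj D (.seq (.com p e q x) C) p (.send q e B)
| recv {p e q x C B} : p ≠ q → BProj D C q B → BProj D (.seq (.com p e q x) C) q (.recv p x B)
| com {p e q x C r B} : p ≠ r → q ≠ r → BProj D C r B → BProj D (.seq (.com p e q x) C) r B
| pick {p q l C B} : BProj D C p B → BProj D (.seq (.sel p q l) C) p (.sel q l B)
| left {p q C B} : p ≠ q → BProj D C q B →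
    BProj D (.seq (.sel p q .left) C) q (.branch p (some B) none)
| right {p q C B} : p ≠ q → BProj D C q B →
    BProj D (.seq (.sel p q .right) C) q (.branch p none (some B))
| selSkip {p q l C r B} : p ≠ r → q ≠ r → BProj D C r B → BProj D (.seq (.sel p q l) C) r B
| condEval {p b C1 C2 B1 B2} : BProj D C1 p B1 → BProj D C2 p B2 →
    BProj D (.cond p b C1 C2) p (.cond b B1 B2)
| condMerge {p b C1 C2 r B1 B2 B} : p ≠ r → BProj D C1 r B1 → BProj D C2 r B2 →
    Merge B1 B2 B → BProj D (.cond p b C1 C2) r B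
| callIn {X r} : r ∈ (D X).1 → BProj D (.call X) r (.call X)
| callOut {X r} : r ∉ (D X).1 → BProj D (.call X) r .nil
| nil {r} : BProj D .nil r .nil

/-- Projectability of a choreography on a process. -/
def projectable_B (D : DefSet) (C : Chor) (p : Pid) : Prop := ∃ B, BProj D C p B

/-- Prepend a selection of label `l` from `p` to each process in `ps`. -/
def add_sels (p : Pid) (l : Label) (ps : List Pid) (C : Chor) : Chor :=
  ps.foldr (fun r acc => .seq (.sel p r l) acc) C

open Classical in
/-- The processes of `ps` that need to be informed of the outcome of the conditional. -/
noncomputable def up_list (D : DefSet) (p : Pid) (b : BExpr) (ps : List Pid)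
    (C1 C2 : Chor) : List Pid :=
  ps.filter fun r => decide (r ≠ p ∧ ¬ projectable_B D (.cond p b C1 C2) r)

/-- The amendment procedure. -/
noncomputable def amend (D : DefSet) (ps : List Pid) : Chor → Chor
| .seq η C => .seq η (amend D ps C)
| .cond p b C1 C2 =>
    let A1 := amend D ps C1
    let A2 := amend D ps C2
    let l := up_list D p b ps A1 A2
    .cond p b (add_sels p .left l A1) (add_sels p .right l A2)
| .call X => .call X
| .nil => .nil

/-- Amendment of a set of procedure definitions. -/
noncomputable def amend_D (D : DefSet) (ps : List Pid) : DefSet :=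
  fun X => ((D X).1, amend D ps (D X).2)

/-- Memory states. -/
abbrev State := Pid → Var → Val

def updState (s : State) (p : Pid) (x : Var) (v : Val) : State :=
  fun q y => if q = p ∧ y = x then v else s q y

def eval : Expr → State → Pid → Val
| .zero, _, _ => 0
| .var x, s, p => s p x
| .succ x, s, p => s p x + 1

def beval : BExpr → State → Pid → Bool
| .eq x y, s, p => s p x == s p y

/-- Transition labels. -/
inductive TLabel
| com (p : Pid) (v : Val) (q : Pid)
| sel (p q : Pid) (l : Label)
| tau (p : Pid)
deriving Repr

def tlProcs : TLabel → Finset Pid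
| .com p _ q => {p, q}
| .sel p q _ => {p, q}
| .tau p => {p}

/-- Labelled transition semantics of choreographic configurations. -/
inductive Step (D : DefSet) : Chor → State → TLabel → Chor → State → Prop
| com {p e q x C s} :
    Step D (.seq (.com p e q x) C) s (.com p (eval e s p) q) C (updState s q x (eval e s p))
| sel {p q l C s} : Step D (.seq (.sel p q l) C) s (.sel p q l) C s
| thenB {p b C1 C2 s} : beval b s p = true → Step D (.cond p b C1 C2) s (.tau p) C1 s
| elseB {p b C1 C2 s} : beval b s p = false → Step D (.cond p b C1 C2) s (.tau p) C2 s
| call {X p s} : p ∈ (D X).1 → Step D (.call X) s (.tau p) (D X).2 s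
| delayEta {η C s t C' s'} : Disjoint (procsEta η) (tlProcs t) →
    Step D C s t C' s' → Step D (.seq η C) s t (.seq η C') s'
| delayCond {p b C1 C2 s t C1' C2' s'} : p ∉ tlProcs t →
    Step D C1 s t C1' s' → Step D C2 s t C2' s' →
    Step D (.cond p b C1 C2) s t (.cond p b C1' C2') s'

/-- Reflexive-transitive closure of the transition relation. -/
inductive StepMany (D : DefSet) : Chor → State → List TLabel → Chor → State → Prop
| refl {C s} : StepMany D C s [] C s
| step {C s t C' s' tl C'' s''} : Step D C s t C' s' → StepMany D C' s' tl C'' s'' →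
    StepMany D C s (t :: tl) C'' s''

/-- Selection expansion of lists of transition labels. -/
inductive SelExp : List TLabel → List TLabel → Prop
| base {tl tl'} : tl.Perm tl' → SelExp tl tl'
| extra {p q l tl tl' tl''} : SelExp tl tl' → (TLabel.sel p q l :: tl').Perm tl'' →
    SelExp tl tl''

/-- A configuration is stuck when it admits no transition. -/
def Stuck (D : DefSet) (C : Chor) (s : State) : Prop :=
  ∀ t C' s', ¬ Step D C s t C' s'

/-- Termination: there is no infinite execution from the configuration. -/
def Terminates (D : DefSet) (C : Chor) (s : State) : Prop :=
  ¬ ∃ f : ℕ → Chor × State × TLabel,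
      (f 0).1 = C ∧ (f 0).2.1 = s ∧
      ∀ n, Step D (f n).1 (f n).2.1 (f n).2.2 (f (n+1)).1 (f (n+1)).2.1

/-- `(D, C)` implements the partial function `f` with input processes `ps`
(storing the inputs in variable `0`) and output process `q`. -/
def implements (D : DefSet) (C : Chor) {m : ℕ} (f : (Fin m → ℕ) → Part ℕ)
    (ps : Fin m → Pid) (q : Pid) : Prop :=
  ∀ (s : State) (n : Fin m → ℕ), (∀ i, s (ps i) 0 = n i) →
    (∀ v ∈ f n, Terminates D C s ∧
      ∀ tl C' s', StepMany D C s tl C' s' → Stuck D C' s' → s' q 0 = v) ∧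
    (¬ (f n).Dom → ¬ ∃ tl C' s', StepMany D C s tl C' s' ∧ Stuck D C' s')

/-- `ps` covers all processes used by the program `(D, C)`. -/
def CoversProcs (D : DefSet) (C : Chor) (ps : List Pid) : Prop :=
  (∀ r ∈ procsC C, r ∈ ps) ∧ ∀ X, ∀ r ∈ procsC (D X).2, r ∈ ps

end CC

namespace CC

theorem Chor_WF.add_sels {p : Pid} {l : Label} {rs : List Pid} {C : Chor}
    (hrs : ∀ r ∈ rs, p ≠ r) (hC : Chor_WF C) : Chor_WF (add_sels p l rs C) := by
  induction rs with
  | nil => exact hC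
  | cons r rs ih =>
    exact ⟨hrs r List.mem_cons_self, ih fun r' hr' => hrs r' (List.mem_cons_of_mem r hr')⟩

theorem ne_of_mem_up_list {D : DefSet} {p : Pid} {b : BExpr} {ps : List Pid} {C1 C2 : Chor}
    {r : Pid} (hr : r ∈ up_list D p b ps C1 C2) : p ≠ r := by
  simp only [up_list, List.mem_filter, decide_eq_true_eq] at hr
  exact hr.2.1.symm

end CC

open CC in
theorem amend_Chor_WF (D : CC.DefSet) (ps : List CC.Pid) (C : CC.Chor)
    (h : Chor_WF C) : Chor_WF (amend D ps C) := by
  induction C with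
  | seq η C ih => exact ⟨h.1, ih h.2⟩
  | cond p b C1 C2 ih1 ih2 =>
    exact ⟨(ih1 h.1).add_sels fun _ => ne_of_mem_up_list,
      (ih2 h.2).add_sels fun _ => ne_of_mem_up_list⟩
  | call X => trivial
  | nil => trivial
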